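/- arXiv:1701.03863 — 6 statements merged into one kernel-verified Lean document; each statement's English description precedes it below -/
import Mathlib

section
/- Fix β > 0 and integers n, p with 1 < p < n. Let J be a uniformly random subset of {1, …, n} of size p and let S = S_J be its column selector matrix, so that expectations are averages over all C(n,p) subsets of size p. Then for the matrix A = I_n + (β/n)·𝟙𝟙ᵀ, the minimum eigenvalue of E[S (SᵀAS)⁻¹ Sᵀ A] equals p/(n + βp) + (p−1)βp/((n−1)(n + βp)). -/
/-!
For `A = 1 + c 𝟙𝟙ᵀ` (`c = β / n`) and a selector `S = S_J`, the compression `SᵀAS` is again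
`1 + c 𝟙𝟙ᵀ` (now of size `p`) and has an explicit inverse, so the oblique projection becomes
`S (SᵀAS)⁻¹ SᵀA = diag u_J + γ u_J (𝟙 - u_J)ᵀ`, where `u_J` is the indicator vector of `J` and
`γ = β / (n + β p)`. Averaging over `J` only needs the number of `p`-sets containing `i`
(resp. containing `i` but not `k`), so `E = (p/n - b) 1 + b 𝟙𝟙ᵀ` with
`b = γ p (n - p) / (n (n - 1))`. Since `b ≥ 0`, the least eigenvalue of `E` is `p/n - b`,
attained on `𝟙ᗮ`; the other one, `p/n - b + n b`, belongs to `𝟙`.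
-/

open scoped BigOperators Matrix

noncomputable section

/-- The column selector matrix of an index set `J` of size `p`: its columns are the
standard basis vectors indexed by `J` (in increasing order).  If `J` does not have
cardinality `p` we return the zero matrix (this case never occurs below). -/
def selector {n : ℕ} (p : ℕ) (J : Finset (Fin n)) : Matrix (Fin n) (Fin p) ℝ :=
  if h : J.card = p then
    Matrix.of fun i j => if i = ((J.orderIsoOfFin h j : { x // x ∈ J }) : Fin n) then (1 : ℝ) else 0
  else 0

/-- The set of (real) eigenvalues of a square matrix. -/
def eigs {q : ℕ} (M : Matrix (Fin q) (Fin q) ℝ) : Set ℝ :=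
  {r : ℝ | ∃ v : Fin q → ℝ, v ≠ 0 ∧ M.mulVec v = r • v}


open Finset Matrix

namespace Finset

variable {α : Type*} [DecidableEq α]

theorem card_filter_mem_powersetCard_mul {s : Finset α} {a : α} (ha : a ∈ s) (p : ℕ) :
    #{t ∈ s.powersetCard p | a ∈ t} * #s = p * (#s).choose p := by
  obtain ⟨m, hm⟩ : ∃ m, #s = m + 1 := Nat.exists_eq_succ_of_ne_zero (card_ne_zero_of_mem ha)
  cases p with
  | zero => simp [card_eq_zero]
  | succ q =>
    have hcount : #{t ∈ s.powersetCard (q + 1) | a ∈ t} = m.choose q := by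
      simpa [hm] using card_filter_powersetCard_subset {a} s (q + 1) (by simpa using ha) (by simp)
    rw [hcount, hm, mul_comm, Nat.add_one_mul_choose_eq, mul_comm]

theorem card_filter_mem_notMem_powersetCard_mul {s : Finset α} {a b : α} (ha : a ∈ s)
    (hb : b ∈ s) (hab : a ≠ b) (p : ℕ) :
    #{t ∈ s.powersetCard p | a ∈ t ∧ b ∉ t} * (#s * (#s - 1)) =
      p * (#s - p) * (#s).choose p := by
  have hfilter : {t ∈ s.powersetCard p | a ∈ t ∧ b ∉ t} =
      {t ∈ (s.erase b).powersetCard p | a ∈ t} := by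
    ext t
    simp only [mem_filter, mem_powersetCard, subset_erase]
    tauto
  have hcount := card_filter_mem_powersetCard_mul (mem_erase.2 ⟨hab, ha⟩) p
  obtain ⟨m, hm⟩ : ∃ m, #s = m + 1 := Nat.exists_eq_succ_of_ne_zero (card_ne_zero_of_mem ha)
  rw [card_erase_of_mem hb, hm, Nat.add_sub_cancel] at hcount
  rw [hfilter, hm, Nat.add_sub_cancel, mul_comm (m + 1), ← mul_assoc, hcount, mul_assoc,
    Nat.choose_mul_succ_eq]
  ring

end Finset

namespace Matrix

variable {m n R : Type*}

theorem inv_one_add_smul_vecMulVec_one [Fintype m] [DecidableEq m] [Field R] (c : R)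
    (hc : 1 + c * Fintype.card m ≠ 0) :
    (1 + c • vecMulVec (1 : m → R) (1 : m → R))⁻¹ =
      1 - (c / (1 + c * Fintype.card m)) • vecMulVec (1 : m → R) (1 : m → R) := by
  have hsq : vecMulVec (1 : m → R) (1 : m → R) * vecMulVec 1 1 =
      (Fintype.card m : R) • vecMulVec 1 1 := by
    rw [vecMulVec_mul_vecMulVec, vecMulVec_smul]
    simp [dotProduct]
  refine inv_eq_right_inv ?_
  rw [mul_sub, Matrix.mul_one, add_mul, Matrix.one_mul, smul_mul_smul_comm, hsq, smul_smul,
    add_sub_assoc, add_eq_left, ← add_smul, ← sub_smul]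
  convert zero_smul R _
  field_simp
  ring

theorem mul_inv_transpose_mul_mul_eq [Fintype m] [DecidableEq m] [Fintype n] [DecidableEq n]
    [Field R] {S : Matrix n m R} (hS : Sᵀ * S = 1) (hS1 : Sᵀ *ᵥ (1 : n → R) = 1) (c : R)
    (hc : 1 + c * Fintype.card m ≠ 0) :
    S * (Sᵀ * (1 + c • vecMulVec (1 : n → R) (1 : n → R)) * S)⁻¹ * Sᵀ *
        (1 + c • vecMulVec (1 : n → R) (1 : n → R)) =
      S * Sᵀ + (c / (1 + c * Fintype.card m)) • vecMulVec (S *ᵥ 1) (1 - S *ᵥ 1) := by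
  have hcompress : Sᵀ * (1 + c • vecMulVec (1 : n → R) (1 : n → R)) * S =
      1 + c • vecMulVec (1 : m → R) (1 : m → R) := by
    rw [Matrix.mul_add, Matrix.mul_one, Matrix.add_mul, hS, Matrix.mul_smul, Matrix.smul_mul,
      mul_vecMulVec, vecMulVec_mul, hS1, ← mulVec_transpose, hS1]
  have hsum : (S *ᵥ 1) ⬝ᵥ (1 : n → R) = Fintype.card m := by
    rw [dotProduct_comm, dotProduct_mulVec, ← mulVec_transpose, hS1]
    simp [dotProduct]
  rw [hcompress, inv_one_add_smul_vecMulVec_one c hc]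
  set γ := c / (1 + c * Fintype.card m) with hγ
  have hcγ : c - γ * c * Fintype.card m = γ := by
    rw [hγ]
    field_simp
    ring
  rw [Matrix.mul_sub, Matrix.mul_one, Matrix.mul_smul, mul_vecMulVec, Matrix.sub_mul,
    Matrix.smul_mul, vecMulVec_mul, ← mulVec_transpose, Matrix.transpose_transpose,
    Matrix.sub_mul, Matrix.mul_add, Matrix.mul_one, Matrix.smul_mul, Matrix.mul_add,
    Matrix.mul_one, Matrix.mul_smul, Matrix.mul_smul, vecMulVec_mul_vecMulVec, hsum, mul_vecMulVec,
    ← mulVec_mulVec, hS1, vecMulVec_sub, vecMulVec_smul]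
  linear_combination (norm := module) hcγ • vecMulVec (S *ᵥ 1) (1 : n → R)

section Embedding

variable [DecidableEq n] [NonAssocSemiring R] (e : m ↪ n)

theorem transpose_submatrix_one_mul_submatrix_one [DecidableEq m] [Fintype n] :
    ((1 : Matrix n n R).submatrix id e)ᵀ * (1 : Matrix n n R).submatrix id e = 1 := by
  rw [transpose_submatrix, transpose_one, ← submatrix_mul _ _ _ _ _ Function.bijective_id,
    Matrix.mul_one, submatrix_one_embedding]

theorem transpose_submatrix_one_mulVec_one [Fintype n] :
    ((1 : Matrix n n R).submatrix id e)ᵀ *ᵥ 1 = 1 := by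
  ext j
  simp [mulVec, dotProduct, one_apply]

theorem submatrix_one_mulVec_one [Fintype m] :
    (1 : Matrix n n R).submatrix id e *ᵥ 1 = (Set.range e).indicator 1 := by
  ext i
  by_cases hi : i ∈ Set.range e
  · obtain ⟨j, rfl⟩ := hi
    rw [mulVec, dotProduct, Fintype.sum_eq_single j
      (fun j' hj' => by simp [e.injective.ne hj'.symm])]
    simp [one_apply]
  · simp only [Set.mem_range, not_exists] at hi
    simp [mulVec, dotProduct, hi, fun j => Ne.symm (hi j)]

theorem submatrix_one_mul_transpose_submatrix_one [Fintype m] :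
    (1 : Matrix n n R).submatrix id e * ((1 : Matrix n n R).submatrix id e)ᵀ =
      diagonal ((Set.range e).indicator 1) := by
  ext i k
  by_cases hi : i ∈ Set.range e
  · obtain ⟨j, rfl⟩ := hi
    rw [mul_apply, Fintype.sum_eq_single j
      (fun j' hj' => by simp [one_apply, e.injective.ne hj'.symm])]
    by_cases hk : e j = k
    · subst hk
      simp [one_apply]
    · simp [one_apply, hk, Ne.symm hk]
  · simp only [Set.mem_range, not_exists] at hi
    simp [mul_apply, one_apply, diagonal_apply, hi, fun j => Ne.symm (hi j)]

end Embedding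

end Matrix

theorem selector_eq_submatrix_one {n p : ℕ} {J : Finset (Fin n)} (h : #J = p) :
    selector p J =
      (1 : Matrix (Fin n) (Fin n) ℝ).submatrix id (J.orderEmbOfFin h).toEmbedding := by
  ext i j
  simp only [selector, dif_pos h, of_apply, submatrix_apply, id, one_apply,
    coe_orderIsoOfFin_apply, RelEmbedding.coe_toEmbedding]
  congr

theorem selector_mul_inv_transpose_mul_mul_eq {n p : ℕ} {J : Finset (Fin n)} (h : #J = p)
    (c : ℝ) (hc : 1 + c * p ≠ 0) :
    selector p J *
        ((selector p J)ᵀ * (1 + c • vecMulVec (1 : Fin n → ℝ) (1 : Fin n → ℝ)) * selector p J)⁻¹ *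
        (selector p J)ᵀ * (1 + c • vecMulVec (1 : Fin n → ℝ) (1 : Fin n → ℝ)) =
      diagonal ((J : Set (Fin n)).indicator (1 : Fin n → ℝ)) + (c / (1 + c * p)) •
        vecMulVec ((J : Set (Fin n)).indicator (1 : Fin n → ℝ))
          (1 - (J : Set (Fin n)).indicator (1 : Fin n → ℝ)) := by
  rw [selector_eq_submatrix_one h, mul_inv_transpose_mul_mul_eq
    (transpose_submatrix_one_mul_submatrix_one _) (transpose_submatrix_one_mulVec_one _) c
    (by simpa using hc), submatrix_one_mul_transpose_submatrix_one, submatrix_one_mulVec_one,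
    RelEmbedding.coe_toEmbedding, range_orderEmbOfFin, Fintype.card_fin]

theorem sum_diagonal_indicator_add_smul_vecMulVec_apply {α : Type*} [Fintype α] [DecidableEq α]
    (𝒜 : Finset (Finset α)) (γ : ℝ) (i k : α) :
    (∑ J ∈ 𝒜, (diagonal ((J : Set α).indicator (1 : α → ℝ)) +
        γ • vecMulVec ((J : Set α).indicator (1 : α → ℝ))
          (1 - (J : Set α).indicator (1 : α → ℝ)) : Matrix α α ℝ)) i k =
      if i = k then (#{J ∈ 𝒜 | i ∈ J} : ℝ) else γ * #{J ∈ 𝒜 | i ∈ J ∧ k ∉ J} := by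
  simp only [Matrix.sum_apply, Matrix.add_apply, Matrix.smul_apply, diagonal_apply,
    vecMulVec_apply, Pi.sub_apply, Pi.one_apply, Set.indicator_apply, mem_coe, smul_eq_mul]
  split_ifs with hik
  · subst hik
    rw [← sum_boole]
    refine sum_congr rfl fun J _ => ?_
    split_ifs <;> simp
  · rw [← sum_boole, mul_sum]
    refine sum_congr rfl fun J _ => ?_
    split_ifs <;> simp_all

theorem expected_selector_projection_eq {n p : ℕ} (hn : 2 ≤ n) (hpn : p ≤ n) {c : ℝ}
    (hc : 1 + c * p ≠ 0) :
    ((n.choose p : ℝ))⁻¹ • ∑ J ∈ powersetCard p (univ : Finset (Fin n)),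
        selector p J * ((selector p J)ᵀ * ((1 : Matrix (Fin n) (Fin n) ℝ) +
          c • Matrix.of fun _ _ => (1 : ℝ)) * selector p J)⁻¹ * (selector p J)ᵀ *
          ((1 : Matrix (Fin n) (Fin n) ℝ) + c • Matrix.of fun _ _ => (1 : ℝ)) =
      (p / n - c / (1 + c * p) * (p * (n - p) / (n * (n - 1)))) • (1 : Matrix (Fin n) (Fin n) ℝ) +
        (c / (1 + c * p) * (p * (n - p) / (n * (n - 1)))) • Matrix.of fun _ _ => (1 : ℝ) := by
  have hnR : (2 : ℝ) ≤ n := by exact_mod_cast hn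
  have hn1 : (n : ℝ) - 1 ≠ 0 := by linarith
  have hchoose : (n.choose p : ℝ) ≠ 0 := by exact_mod_cast (Nat.choose_pos hpn).ne'
  have hones : (Matrix.of fun _ _ => (1 : ℝ) : Matrix (Fin n) (Fin n) ℝ) = vecMulVec 1 1 := by
    ext
    simp [vecMulVec_apply]
  rw [hones, sum_congr rfl fun J hJ =>
    selector_mul_inv_transpose_mul_mul_eq (mem_powersetCard_univ.1 hJ) _ hc]
  ext i k
  rw [Matrix.smul_apply, sum_diagonal_indicator_add_smul_vecMulVec_apply]
  split_ifs with hik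
  · subst hik
    have hcount := card_filter_mem_powersetCard_mul (mem_univ i) p
    rw [card_univ, Fintype.card_fin] at hcount
    have hcountR : (#{J ∈ powersetCard p (univ : Finset (Fin n)) | i ∈ J} : ℝ) * n =
        p * n.choose p := by
      exact_mod_cast hcount
    simp only [one_apply_eq, vecMulVec_apply, Pi.one_apply, Matrix.add_apply, Matrix.smul_apply,
      smul_eq_mul, mul_one, sub_add_cancel]
    rw [eq_div_of_mul_eq (by positivity) hcountR]
    field_simp
  · have hcount := card_filter_mem_notMem_powersetCard_mul (mem_univ i) (mem_univ k) hik p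
    rw [card_univ, Fintype.card_fin] at hcount
    have hcountR : (#{J ∈ powersetCard p (univ : Finset (Fin n)) | i ∈ J ∧ k ∉ J} : ℝ) *
        (n * (n - 1)) = p * (n - p) * n.choose p := by
      have := congrArg (Nat.cast : ℕ → ℝ) hcount
      push_cast [Nat.cast_sub hpn, Nat.cast_sub (by omega : 1 ≤ n)] at this
      exact this
    simp only [one_apply_ne hik, vecMulVec_apply, Pi.one_apply, Matrix.add_apply,
      Matrix.smul_apply, smul_eq_mul, mul_zero, mul_one, zero_add]
    rw [eq_div_of_mul_eq (mul_ne_zero (by positivity) hn1) hcountR]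
    field_simp

theorem isLeast_eigs_smul_one_add_smul_of_one {q : ℕ} (hq : 2 ≤ q) (a : ℝ) {b : ℝ}
    (hb : 0 ≤ b) :
    IsLeast (eigs (a • 1 + b • Matrix.of fun _ _ => (1 : ℝ) : Matrix (Fin q) (Fin q) ℝ)) a := by
  have hmulVec : ∀ v : Fin q → ℝ,
      (a • 1 + b • Matrix.of fun _ _ => (1 : ℝ) : Matrix (Fin q) (Fin q) ℝ) *ᵥ v =
        a • v + (b * ∑ i, v i) • 1 := by
    intro v
    ext i
    simp [Matrix.mulVec, dotProduct, add_mul, sum_add_distrib, mul_sum, Matrix.one_apply]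
  refine ⟨?_, ?_⟩
  · let i₀ : Fin q := ⟨0, by omega⟩
    let i₁ : Fin q := ⟨1, by omega⟩
    have hne : i₀ ≠ i₁ := by simp [i₀, i₁, Fin.ext_iff]
    refine ⟨Pi.single i₀ 1 - Pi.single i₁ 1, ?_, ?_⟩
    · intro h
      simpa [hne] using congrFun h i₀
    · have hsum : ∑ i, (Pi.single i₀ 1 - Pi.single i₁ 1 : Fin q → ℝ) i = 0 := by simp
      rw [hmulVec, hsum, mul_zero, zero_smul, add_zero]
  · rintro r ⟨v, hv, hr⟩
    rw [hmulVec] at hr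
    have hsum : r * ∑ i, v i = (a + b * q) * ∑ i, v i := by
      have := congrArg (fun w : Fin q → ℝ => ∑ i, w i) hr
      simp only [Pi.add_apply, Pi.smul_apply, smul_eq_mul, Pi.one_apply, mul_one, sum_add_distrib,
        ← mul_sum, sum_const, card_univ, Fintype.card_fin, nsmul_eq_mul] at this
      linear_combination -this
    by_cases hs : ∑ i, v i = 0
    · rw [hs, mul_zero, zero_smul, add_zero] at hr
      exact (smul_left_injective ℝ hv hr).le
    · have := mul_right_cancel₀ hs hsum
      nlinarith

/-- For the matrix `A = I + (β/n) 𝟙𝟙ᵀ` and `J` a uniformly random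
subset of `{1,…,n}` of size `p` (with column selector `S = S_J`), the minimum
eigenvalue of `E[S (SᵀAS)⁻¹ Sᵀ A]` equals
`p/(n + βp) + (p−1)βp/((n−1)(n + βp))`. -/
theorem stmt1 (β : ℝ) (hβ : 0 < β) (n p : ℕ) (hp : 1 < p) (hpn : p < n)
    (A : Matrix (Fin n) (Fin n) ℝ)
    (hA : A = (1 : Matrix (Fin n) (Fin n) ℝ) + (β / n) • Matrix.of (fun _ _ => (1 : ℝ)))
    (E : Matrix (Fin n) (Fin n) ℝ)
    (hE : E = ((n.choose p : ℝ))⁻¹ • (∑ J ∈ Finset.powersetCard p (Finset.univ : Finset (Fin n)),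
      selector p J * ((selector p J)ᵀ * A * selector p J)⁻¹ * (selector p J)ᵀ * A)) :
    IsLeast (eigs E)
      ((p : ℝ) / (n + β * p) + ((p : ℝ) - 1) * β * p / (((n : ℝ) - 1) * (n + β * p))) := by
  have hn : 2 ≤ n := by omega
  have hnR : (2 : ℝ) ≤ n := by exact_mod_cast hn
  have hpnR : (p : ℝ) ≤ n := by exact_mod_cast hpn.le
  have hc : 1 + β / n * p ≠ 0 := by positivity
  have hd : (n : ℝ) + β * p ≠ 0 := by positivity
  have hn1 : (n : ℝ) - 1 ≠ 0 := by linarith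
  set b := β / n / (1 + β / n * p) * (p * (n - p) / (n * (n - 1))) with hb_def
  have hb : 0 ≤ b := by
    have : 0 ≤ (n : ℝ) - p := by linarith
    have : 0 ≤ (n : ℝ) - 1 := by linarith
    positivity
  have hmin : (p : ℝ) / (n + β * p) + ((p : ℝ) - 1) * β * p / (((n : ℝ) - 1) * (n + β * p)) =
      p / n - b := by
    rw [hb_def]
    field_simp
    ring
  rw [hE, hA, expected_selector_projection_eq hn hpn.le hc, hmin]
  exact isLeast_eigs_smul_one_add_smul_of_one hn _ hb

end
end

section
/- Let A be an n×n real matrix and let S be a random n×p real matrix (distribution given by a probability measure, with the relevant expectations existing). Put G := E[P_{A^{1/2}S}] and suppose G is positive definite. If ν > 0 is any number such that E[P_{A^{1/2}S} G⁻¹ P_{A^{1/2}S}] ⪯ ν·G in the positive semidefinite order, then ν ≥ n/p. -/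
open scoped BigOperators Matrix
open MeasureTheory

noncomputable section

/-- `B` is the Moore–Penrose pseudoinverse of `A`. -/
def IsMoorePenrose {m n : ℕ} (A : Matrix (Fin m) (Fin n) ℝ) (B : Matrix (Fin n) (Fin m) ℝ) : Prop :=
  A * B * A = A ∧ B * A * B = B ∧ (A * B)ᵀ = A * B ∧ (B * A)ᵀ = B * A

open Classical in
/-- The Moore–Penrose pseudoinverse (it always exists and is unique). -/
def pinv {m n : ℕ} (A : Matrix (Fin m) (Fin n) ℝ) : Matrix (Fin n) (Fin m) ℝ :=
  if h : ∃ B, IsMoorePenrose A B then h.choose else 0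

/-- The orthogonal projector `P_M = M(MᵀM)†Mᵀ` onto the column space of `M`. -/
def proj {m n : ℕ} (M : Matrix (Fin m) (Fin n) ℝ) : Matrix (Fin m) (Fin m) ℝ :=
  M * pinv (Mᵀ * M) * Mᵀ

/-- The positive semidefinite square root of a positive semidefinite matrix
(Mathlib's former `Matrix.PosSemidef.sqrt`, removed since; restored with its old definition). -/
def Matrix.PosSemidef.sqrt {n : Type*} [Fintype n] [DecidableEq n] {A : Matrix n n ℝ}
    (hA : A.PosSemidef) : Matrix n n ℝ :=
  hA.1.eigenvectorUnitary.1 * Matrix.diagonal ((↑) ∘ (√·) ∘ hA.1.eigenvalues) *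
  (star hA.1.eigenvectorUnitary : Matrix n n ℝ)

/-- Entrywise expectation of a random matrix. -/
def Mexp {Ω : Type*} [MeasurableSpace Ω] (ℙ : Measure Ω) {m n : ℕ}
    (f : Ω → Matrix (Fin m) (Fin n) ℝ) : Matrix (Fin m) (Fin n) ℝ :=
  Matrix.of fun i j => ∫ ω, f ω i j ∂ℙ

/-!
Each `P = P_{A^{1/2}S}` is idempotent, so `tr (P G⁻¹ P) = tr (G⁻¹ P)`, and taking expectations
gives `tr E[P G⁻¹ P] = tr (G⁻¹ G) = n`. On the other hand `P_M` has the same trace as the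
`p × p` orthogonal projector `(MᵀM)(MᵀM)†`, whose diagonal entries are at most `1`; so `tr G ≤ p`.
Taking the trace of `ν G - E[P G⁻¹ P] ⪰ 0` yields `n ≤ ν tr G ≤ ν p`.
-/

open Matrix

section MoorePenrose

variable {m n : ℕ}

theorem isMoorePenrose_diagonal (d : Fin m → ℝ) :
    IsMoorePenrose (diagonal d) (diagonal d⁻¹) := by
  simp only [IsMoorePenrose, diagonal_mul_diagonal, diagonal_transpose, Pi.inv_apply,
    diagonal_eq_diagonal_iff, mul_inv_mul_cancel, true_and, and_true]
  exact fun i => by simpa using mul_inv_mul_cancel (d i)⁻¹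

theorem IsMoorePenrose.map_starAlgEquiv
    (φ : Matrix (Fin m) (Fin m) ℝ ≃⋆ₐ[ℝ] Matrix (Fin m) (Fin m) ℝ)
    {A B : Matrix (Fin m) (Fin m) ℝ} (h : IsMoorePenrose A B) : IsMoorePenrose (φ A) (φ B) := by
  have hφ : ∀ X, (φ X)ᵀ = φ Xᵀ := fun X => by
    simpa only [star_eq_conjTranspose, conjTranspose_eq_transpose_of_trivial] using
      (map_star φ X).symm
  obtain ⟨h1, h2, h3, h4⟩ := h
  exact ⟨by rw [← map_mul, ← map_mul, h1], by rw [← map_mul, ← map_mul, h2],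
    by rw [← map_mul, hφ, h3], by rw [← map_mul, hφ, h4]⟩

theorem Matrix.IsHermitian.exists_isMoorePenrose {A : Matrix (Fin m) (Fin m) ℝ}
    (hA : A.IsHermitian) : ∃ B, IsMoorePenrose A B := by
  rw [hA.spectral_theorem]
  exact ⟨_, (isMoorePenrose_diagonal _).map_starAlgEquiv _⟩

theorem isMoorePenrose_pinv {A : Matrix (Fin m) (Fin n) ℝ} (h : ∃ B, IsMoorePenrose A B) :
    IsMoorePenrose A (pinv A) := by
  rw [pinv, dif_pos h]
  exact h.choose_spec

theorem isMoorePenrose_pinv_transpose_mul_self (M : Matrix (Fin m) (Fin n) ℝ) :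
    IsMoorePenrose (Mᵀ * M) (pinv (Mᵀ * M)) :=
  isMoorePenrose_pinv <| Matrix.IsHermitian.exists_isMoorePenrose <| by
    simpa only [conjTranspose_eq_transpose_of_trivial] using isHermitian_conjTranspose_mul_self M

end MoorePenrose

section Projector

variable {m n : ℕ}

theorem mul_eq_zero_of_transpose_mul_self_mul_eq_zero {ι : Type*} [Fintype ι]
    {M : Matrix (Fin m) (Fin n) ℝ} {X : Matrix (Fin n) ι ℝ} (h : Mᵀ * M * X = 0) : M * X = 0 := by
  rw [← conjTranspose_mul_self_eq_zero, conjTranspose_eq_transpose_of_trivial, transpose_mul,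
    Matrix.mul_assoc, ← Matrix.mul_assoc Mᵀ, h, Matrix.mul_zero]

theorem IsMoorePenrose.mul_mul_transpose_mul_self {M : Matrix (Fin m) (Fin n) ℝ}
    {B : Matrix (Fin n) (Fin n) ℝ} (h : IsMoorePenrose (Mᵀ * M) B) : M * B * (Mᵀ * M) = M := by
  have h0 : M * (B * (Mᵀ * M) - 1) = 0 :=
    mul_eq_zero_of_transpose_mul_self_mul_eq_zero <| by
      rw [Matrix.mul_sub, ← Matrix.mul_assoc, h.1, Matrix.mul_one, sub_self]
  rwa [Matrix.mul_sub, Matrix.mul_one, sub_eq_zero, ← Matrix.mul_assoc] at h0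

theorem proj_mul_self (M : Matrix (Fin m) (Fin n) ℝ) : proj M * proj M = proj M := by
  have h := (isMoorePenrose_pinv_transpose_mul_self M).mul_mul_transpose_mul_self
  simp only [proj, Matrix.mul_assoc] at h ⊢
  rw [← Matrix.mul_assoc Mᵀ, ← Matrix.mul_assoc (pinv _), ← Matrix.mul_assoc M, h]

theorem Matrix.IsHermitian.trace_le_card_of_isIdempotentElem {ι : Type*} [Fintype ι]
    [DecidableEq ι] {Q : Matrix ι ι ℝ} (hQ : Q.IsHermitian) (hQQ : IsIdempotentElem Q) :
    Q.trace ≤ Fintype.card ι := by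
  have hsq : (1 - Q)ᴴ * (1 - Q) = 1 - Q := by
    rw [conjTranspose_sub, conjTranspose_one, hQ, hQQ.one_sub.eq]
  have hdiag : ∀ i, Q i i ≤ 1 := fun i => by
    have h := (posSemidef_conjTranspose_mul_self (1 - Q)).diag_nonneg (i := i)
    rw [hsq, sub_apply, one_apply_eq] at h
    linarith
  simpa [trace] using Finset.sum_le_sum fun i (_ : i ∈ Finset.univ) => hdiag i

theorem trace_proj_le (M : Matrix (Fin m) (Fin n) ℝ) : (proj M).trace ≤ n := by
  obtain ⟨h1, -, h3, -⟩ := isMoorePenrose_pinv_transpose_mul_self M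
  have hidem : IsIdempotentElem (Mᵀ * M * pinv (Mᵀ * M)) := by
    rw [IsIdempotentElem, ← Matrix.mul_assoc, h1]
  have hherm : (Mᵀ * M * pinv (Mᵀ * M)).IsHermitian := by
    rw [IsHermitian, conjTranspose_eq_transpose_of_trivial, h3]
  rw [proj, trace_mul_cycle]
  simpa using hherm.trace_le_card_of_isIdempotentElem hidem

end Projector

section Expectation

variable {Ω : Type*} [MeasurableSpace Ω] {ℙ : Measure Ω} {m n : ℕ}

theorem integrable_mul_apply (C : Matrix (Fin m) (Fin n) ℝ) {f : Ω → Matrix (Fin n) (Fin m) ℝ}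
    (hf : ∀ i j, Integrable (fun ω => f ω i j) ℙ) (i j : Fin m) :
    Integrable (fun ω => (C * f ω) i j) ℙ := by
  simp only [mul_apply]
  exact integrable_finsetSum _ fun k _ => (hf k j).const_mul _

theorem Mexp_mul_left (C : Matrix (Fin m) (Fin n) ℝ) {f : Ω → Matrix (Fin n) (Fin m) ℝ}
    (hf : ∀ i j, Integrable (fun ω => f ω i j) ℙ) :
    Mexp ℙ (fun ω => C * f ω) = C * Mexp ℙ f := by
  ext i j
  simp only [Mexp, of_apply, mul_apply]
  rw [integral_finsetSum _ fun k _ => (hf k j).const_mul _]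
  simp only [integral_const_mul]

theorem trace_Mexp {f : Ω → Matrix (Fin n) (Fin n) ℝ}
    (hf : ∀ i, Integrable (fun ω => f ω i i) ℙ) :
    (Mexp ℙ f).trace = ∫ ω, (f ω).trace ∂ℙ := by
  simp only [trace, diag, Mexp, of_apply]
  rw [integral_finsetSum _ fun i _ => hf i]

theorem trace_Mexp_le [IsProbabilityMeasure ℙ] {f : Ω → Matrix (Fin n) (Fin n) ℝ}
    (hf : ∀ i, Integrable (fun ω => f ω i i) ℙ) {c : ℝ} (hc : ∀ ω, (f ω).trace ≤ c) :
    (Mexp ℙ f).trace ≤ c := by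
  rw [trace_Mexp hf]
  calc ∫ ω, (f ω).trace ∂ℙ ≤ ∫ _, c ∂ℙ :=
        integral_mono (integrable_finsetSum _ fun i _ => hf i) (integrable_const c) hc
    _ = c := by simp

theorem trace_Mexp_mul_inv_mul {P : Ω → Matrix (Fin n) (Fin n) ℝ}
    (hP : ∀ ω, P ω * P ω = P ω) (hPint : ∀ i j, Integrable (fun ω => P ω i j) ℙ)
    (hQint : ∀ i, Integrable (fun ω => (P ω * (Mexp ℙ P)⁻¹ * P ω) i i) ℙ)
    (hG : IsUnit (Mexp ℙ P)) :
    (Mexp ℙ fun ω => P ω * (Mexp ℙ P)⁻¹ * P ω).trace = n := by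
  have htrace : ∀ ω, (P ω * (Mexp ℙ P)⁻¹ * P ω).trace = ((Mexp ℙ P)⁻¹ * P ω).trace := fun ω => by
    rw [trace_mul_cycle, hP, trace_mul_comm]
  calc (Mexp ℙ fun ω => P ω * (Mexp ℙ P)⁻¹ * P ω).trace
      = ∫ ω, ((Mexp ℙ P)⁻¹ * P ω).trace ∂ℙ := by simp only [trace_Mexp hQint, htrace]
    _ = (Mexp ℙ fun ω => (Mexp ℙ P)⁻¹ * P ω).trace :=
        (trace_Mexp fun i => integrable_mul_apply _ hPint i i).symm
    _ = n := by
        rw [Mexp_mul_left _ hPint, nonsing_inv_mul _ ((isUnit_iff_isUnit_det _).mp hG),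
          trace_one, Fintype.card_fin]

end Expectation

theorem stmt8_general {Ω : Type*} [MeasurableSpace Ω] (ℙ : Measure Ω) [IsProbabilityMeasure ℙ]
    (n p : ℕ)
    (A : Matrix (Fin n) (Fin n) ℝ) (hA : A.PosSemidef)
    (S : Ω → Matrix (Fin n) (Fin p) ℝ)
    (hPint : ∀ i j, Integrable (fun ω => proj (hA.sqrt * S ω) i j) ℙ)
    (G : Matrix (Fin n) (Fin n) ℝ)
    (hG : G = Mexp ℙ (fun ω => proj (hA.sqrt * S ω)))
    (hGpd : G.PosDef)
    (hQint : ∀ i j, Integrable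
      (fun ω => (proj (hA.sqrt * S ω) * G⁻¹ * proj (hA.sqrt * S ω)) i j) ℙ)
    (ν : ℝ) (hν : 0 < ν)
    (hle : (ν • G - Mexp ℙ (fun ω => proj (hA.sqrt * S ω) * G⁻¹ * proj (hA.sqrt * S ω))).PosSemidef) :
    (n : ℝ) / p ≤ ν := by
  subst hG
  have htrace_Q := trace_Mexp_mul_inv_mul (fun ω => proj_mul_self _) hPint (fun i => hQint i i)
    hGpd.isUnit
  have htrace_G := trace_Mexp_le (fun i => hPint i i) fun ω => trace_proj_le (hA.sqrt * S ω)
  have hnonneg := hle.trace_nonneg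
  rw [trace_sub, trace_smul, htrace_Q, smul_eq_mul, sub_nonneg] at hnonneg
  exact div_le_of_le_mul₀ p.cast_nonneg hν.le <| hnonneg.trans <| by gcongr

/-- Let `A` be an `n×n` (positive semidefinite, so that `A^{1/2}` is
defined) matrix and `S` a random `n×p` matrix.  Put `G := E[P_{A^{1/2}S}]` and suppose
`G` is positive definite.  If `ν > 0` satisfies
`E[P_{A^{1/2}S} G⁻¹ P_{A^{1/2}S}] ⪯ ν·G`, then `ν ≥ n/p`. -/
theorem stmt8 {Ω : Type*} [MeasurableSpace Ω] (ℙ : Measure Ω) [IsProbabilityMeasure ℙ]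
    (n p : ℕ) (hp : 0 < p)
    (A : Matrix (Fin n) (Fin n) ℝ) (hA : A.PosSemidef)
    (S : Ω → Matrix (Fin n) (Fin p) ℝ)
    (hPint : ∀ i j, Integrable (fun ω => proj (hA.sqrt * S ω) i j) ℙ)
    (G : Matrix (Fin n) (Fin n) ℝ)
    (hG : G = Mexp ℙ (fun ω => proj (hA.sqrt * S ω)))
    (hGpd : G.PosDef)
    (hQint : ∀ i j, Integrable
      (fun ω => (proj (hA.sqrt * S ω) * G⁻¹ * proj (hA.sqrt * S ω)) i j) ℙ)
    (ν : ℝ) (hν : 0 < ν)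
    (hle : (ν • G - Mexp ℙ (fun ω => proj (hA.sqrt * S ω) * G⁻¹ * proj (hA.sqrt * S ω))).PosSemidef) :
    (n : ℝ) / p ≤ ν :=
  stmt8_general ℙ n p A hA S hPint G hG hGpd hQint ν hν hle

end
end

section
/- Fix α > 0 and β with α + β > 0, and integers n, p with 1 < p < n. Let A = αI_n + (β/n)·𝟙𝟙ᵀ, let J be a uniformly random subset of {1,…,n} of size p with column selector S = S_J. Then E[S(SᵀAS)⁻¹Sᵀ A] = [p((n−1)α + (p−1)β) / ((n−1)(nα + pβ))] · I_n + [(n−p)pβ / (n(n−1)(nα + pβ))] · 𝟙𝟙ᵀ. -/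
/-!
Write `A = α I + c 𝟙𝟙ᵀ` with `c = β / n`. A column selector `S` satisfies `SᵀS = I` and `Sᵀ𝟙 = 𝟙`,
so `SᵀAS = α I + c 𝟙𝟙ᵀ` on `ℝᵖ`, which is invertible with eigenvector `𝟙` for `α + p c`, and
`SᵀA = (SᵀAS) Sᵀ + c 𝟙 (𝟙 - u)ᵀ`, where `u = S𝟙` is the indicator vector of `J`. Hence
`S (SᵀAS)⁻¹ SᵀA = diag u + γ u (𝟙 - u)ᵀ` with `γ = β / (nα + pβ)`, and averaging over `J` only
needs the inclusion probabilities `P(i ∈ J) = p / n` and `P(i, k ∈ J) = p (p - 1) / (n (n - 1))`.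
-/

open scoped BigOperators Matrix

noncomputable section

open Matrix Finset

section ScalarPlusAllOnes

variable {ι K : Type*} [Fintype ι] [DecidableEq ι] [Field K]

theorem smul_one_add_smul_vecMulVec_one_mulVec_one (a c : K) :
    (a • 1 + c • vecMulVec 1 1 : Matrix ι ι K) *ᵥ 1 = (a + Fintype.card ι * c) • 1 := by
  simp only [add_mulVec, smul_mulVec, one_mulVec, vecMulVec_mulVec, dotProduct_one, sum_const,
    card_univ, Pi.one_apply, nsmul_eq_mul, mul_one, op_smul_eq_smul, smul_smul, add_smul,
    mul_comm c]

theorem smul_one_add_smul_vecMulVec_one_mul_eq_one {a c : K} (ha : a ≠ 0)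
    (hac : a + Fintype.card ι * c ≠ 0) :
    (a • 1 + c • vecMulVec 1 1 : Matrix ι ι K)
      * (a⁻¹ • 1 - (c / (a * (a + Fintype.card ι * c))) • vecMulVec 1 1) = 1 := by
  simp only [Matrix.add_mul, Matrix.mul_sub, smul_mul_smul, Matrix.one_mul,
    vecMulVec_mul_vecMulVec, dotProduct_one, smul_smul, vecMulVec_smul, Pi.one_apply, sum_const,
    card_univ, nsmul_eq_mul, mul_one]
  -- the normal form in which `field_simp` looks for this side condition
  have hac' : a + c * Fintype.card ι ≠ 0 := by rwa [mul_comm]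
  have hcoef : c * a⁻¹ - (a * (c / (a * (a + Fintype.card ι * c)))
      + c * (c / (a * (a + Fintype.card ι * c))) * Fintype.card ι) = 0 := by
    field_simp
    ring
  rw [mul_inv_cancel₀ ha, one_smul, add_sub_assoc, ← add_smul, ← sub_smul, hcoef, zero_smul,
    add_zero]

theorem isUnit_det_smul_one_add_smul_vecMulVec_one {a c : K} (ha : a ≠ 0)
    (hac : a + Fintype.card ι * c ≠ 0) :
    IsUnit (a • 1 + c • vecMulVec 1 1 : Matrix ι ι K).det :=
  isUnit_det_of_right_inverse (smul_one_add_smul_vecMulVec_one_mul_eq_one ha hac)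

theorem inv_smul_one_add_smul_vecMulVec_one_mulVec_one {a c : K} (ha : a ≠ 0)
    (hac : a + Fintype.card ι * c ≠ 0) :
    (a • 1 + c • vecMulVec 1 1 : Matrix ι ι K)⁻¹ *ᵥ 1 = (a + Fintype.card ι * c)⁻¹ • 1 := by
  have hdet := isUnit_det_smul_one_add_smul_vecMulVec_one ha hac
  have h := congrArg ((a • 1 + c • vecMulVec 1 1 : Matrix ι ι K)⁻¹ *ᵥ ·)
    (smul_one_add_smul_vecMulVec_one_mulVec_one (ι := ι) a c)
  simp only [mulVec_mulVec, nonsing_inv_mul _ hdet, one_mulVec, mulVec_smul] at h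
  rw [eq_inv_smul_iff₀ hac]
  exact h.symm

end ScalarPlusAllOnes

section Compression

variable {ι κ K : Type*} [Fintype ι] [DecidableEq ι] [Fintype κ] [DecidableEq κ] [Field K]

theorem mul_inv_transpose_mul_mul_transpose_mul {S : Matrix κ ι K} (hSS : Sᵀ * S = 1)
    (hS1 : Sᵀ *ᵥ 1 = 1) {a c : K} (ha : a ≠ 0) (hac : a + Fintype.card ι * c ≠ 0) :
    S * (Sᵀ * (a • 1 + c • vecMulVec 1 1 : Matrix κ κ K) * S)⁻¹ * Sᵀ
        * (a • 1 + c • vecMulVec 1 1 : Matrix κ κ K)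
      = S * Sᵀ + (c / (a + Fintype.card ι * c)) • vecMulVec (S *ᵥ 1) (1 - S *ᵥ 1) := by
  set A : Matrix κ κ K := a • 1 + c • vecMulVec 1 1
  have hK : Sᵀ * A * S = a • 1 + c • vecMulVec 1 1 := by
    simp only [A, Matrix.mul_add, Matrix.add_mul, Matrix.mul_smul, Matrix.smul_mul, Matrix.mul_one,
      mul_vecMulVec, vecMulVec_mul, hSS, hS1, ← mulVec_transpose]
  have hSA : Sᵀ * A = (Sᵀ * A * S) * Sᵀ + c • vecMulVec 1 (1 - S *ᵥ 1) := by
    rw [hK]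
    simp only [A, Matrix.mul_add, Matrix.add_mul, Matrix.mul_smul, Matrix.smul_mul, Matrix.mul_one,
      Matrix.one_mul, mul_vecMulVec, vecMulVec_mul, hS1, vecMul_transpose, vecMulVec_sub, smul_sub]
    abel
  have hdet : IsUnit (Sᵀ * A * S).det := by
    rw [hK]
    exact isUnit_det_smul_one_add_smul_vecMulVec_one ha hac
  calc S * (Sᵀ * A * S)⁻¹ * Sᵀ * A = S * ((Sᵀ * A * S)⁻¹ * (Sᵀ * A)) := by
        simp only [Matrix.mul_assoc]
    _ = S * Sᵀ + c • vecMulVec (S *ᵥ ((Sᵀ * A * S)⁻¹ *ᵥ 1)) (1 - S *ᵥ 1) := by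
        nth_rw 2 [hSA]
        rw [Matrix.mul_add, ← Matrix.mul_assoc _ (Sᵀ * A * S), nonsing_inv_mul _ hdet,
          Matrix.one_mul, Matrix.mul_smul, mul_vecMulVec, Matrix.mul_add, Matrix.mul_smul,
          mul_vecMulVec]
    _ = _ := by
        rw [hK, inv_smul_one_add_smul_vecMulVec_one_mulVec_one ha hac, mulVec_smul,
          smul_vecMulVec, smul_smul, ← div_eq_mul_inv]

end Compression

section OneSubmatrix

variable {ι κ R : Type*} [DecidableEq κ] [Semiring R] (f : ι ↪ κ)

theorem transpose_one_submatrix_mul_self [Fintype κ] [DecidableEq ι] :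
    ((1 : Matrix κ κ R).submatrix id f)ᵀ * (1 : Matrix κ κ R).submatrix id f = 1 := by
  ext i j
  simp [mul_apply, one_apply, f.injective.eq_iff]

theorem transpose_one_submatrix_mulVec_one [Fintype κ] :
    ((1 : Matrix κ κ R).submatrix id f)ᵀ *ᵥ 1 = 1 := by
  ext i
  simp [mulVec, dotProduct, one_apply]

theorem one_submatrix_mulVec_one [Fintype ι] :
    (1 : Matrix κ κ R).submatrix id f *ᵥ 1 = (Set.range f).indicator 1 := by
  ext i
  by_cases hi : i ∈ Set.range f
  · obtain ⟨y, rfl⟩ := hi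
    rw [mulVec, dotProduct, Fintype.sum_eq_single y fun x hx => by simp [one_apply, hx.symm]]
    simp [one_apply]
  · have hi' : ∀ x, i ≠ f x := fun x hx => hi ⟨x, hx.symm⟩
    simp [mulVec, dotProduct, one_apply, hi', Set.indicator_of_notMem hi]

theorem one_submatrix_mul_transpose [Fintype ι] :
    (1 : Matrix κ κ R).submatrix id f * ((1 : Matrix κ κ R).submatrix id f)ᵀ
      = diagonal ((Set.range f).indicator 1) := by
  ext i j
  by_cases hi : i ∈ Set.range f
  · obtain ⟨y, rfl⟩ := hi
    rw [mul_apply, Fintype.sum_eq_single y fun x hx => by simp [one_apply, hx.symm]]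
    simp [diagonal_apply, one_apply, eq_comm]
  · have hi' : ∀ x, i ≠ f x := fun x hx => hi ⟨x, hx.symm⟩
    simp [mul_apply, one_apply, diagonal_apply, hi', Set.indicator_of_notMem hi]

end OneSubmatrix

theorem selector_eq_one_submatrix {n p : ℕ} {J : Finset (Fin n)} (h : #J = p) :
    selector p J = (1 : Matrix (Fin n) (Fin n) ℝ).submatrix id (J.orderEmbOfFin h) := by
  ext i j
  rw [selector, dif_pos h]
  simp only [of_apply, submatrix_apply, id, one_apply, coe_orderIsoOfFin_apply]
  congr

theorem selector_mul_inv_mul_transpose_mul {n p : ℕ} {J : Finset (Fin n)} (h : #J = p) {a c : ℝ}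
    (ha : a ≠ 0) (hac : a + p * c ≠ 0) :
    selector p J * ((selector p J)ᵀ * (a • 1 + c • vecMulVec 1 1 : Matrix (Fin n) (Fin n) ℝ)
        * selector p J)⁻¹ * (selector p J)ᵀ * (a • 1 + c • vecMulVec 1 1)
      = diagonal ((J : Set (Fin n)).indicator 1)
        + (c / (a + p * c)) • vecMulVec ((J : Set (Fin n)).indicator 1)
          (1 - (J : Set (Fin n)).indicator 1) := by
  have key := mul_inv_transpose_mul_mul_transpose_mul
    (transpose_one_submatrix_mul_self (J.orderEmbOfFin h).toEmbedding)
    (transpose_one_submatrix_mulVec_one _) ha (by rwa [Fintype.card_fin])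
  rw [Fintype.card_fin, one_submatrix_mul_transpose, one_submatrix_mulVec_one] at key
  rw [selector_eq_one_submatrix h]
  simpa only [RelEmbedding.coe_toEmbedding, range_orderEmbOfFin] using key

section Sampling

variable {α : Type*} [Fintype α] [DecidableEq α] {p : ℕ}

theorem sum_powersetCard_ite_subset {T : Finset α} (hT : #T ≤ p) :
    ∑ J ∈ (univ : Finset α).powersetCard p, (if T ⊆ J then (1 : ℝ) else 0)
      = (Fintype.card α).choose p * p.choose #T / (Fintype.card α).choose #T := by
  have hTn : #T ≤ Fintype.card α := card_le_univ T
  rw [sum_boole, card_filter_powersetCard_subset T univ p (subset_univ T) hT, card_univ,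
    eq_div_iff (by exact_mod_cast (Nat.choose_pos hTn).ne'), mul_comm]
  exact_mod_cast (Nat.choose_mul hT).symm

theorem sum_powersetCard_indicator (hp : 1 ≤ p) (i : α) :
    ∑ J ∈ (univ : Finset α).powersetCard p, (J : Set α).indicator 1 i
      = ((Fintype.card α).choose p : ℝ) * p / Fintype.card α := by
  simpa [Set.indicator_apply] using sum_powersetCard_ite_subset (T := {i}) (p := p) (by simpa)

theorem sum_powersetCard_indicator_mul_indicator (hp : 2 ≤ p) {i k : α} (hik : i ≠ k) :
    ∑ J ∈ (univ : Finset α).powersetCard p, (J : Set α).indicator 1 i * (J : Set α).indicator 1 k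
      = ((Fintype.card α).choose p : ℝ) * (p * (p - 1))
          / (Fintype.card α * (Fintype.card α - 1)) := by
  have h := sum_powersetCard_ite_subset (T := {i, k}) (p := p) (by rwa [card_pair hik])
  rw [card_pair hik, Nat.cast_choose_two, Nat.cast_choose_two] at h
  simp only [insert_subset_iff, singleton_subset_iff] at h
  calc _ = ∑ J ∈ (univ : Finset α).powersetCard p, if i ∈ J ∧ k ∈ J then (1 : ℝ) else 0 := by
        simp only [Set.indicator_apply, mem_coe, Pi.one_apply, ite_zero_mul_ite_zero, mul_one]
    _ = _ := by rw [h, mul_div_assoc', div_div_div_cancel_right₀ two_ne_zero]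

theorem sum_powersetCard_diagonal_add_smul_vecMulVec (hp : 2 ≤ p) (γ : ℝ) :
    ∑ J ∈ (univ : Finset α).powersetCard p, (diagonal ((J : Set α).indicator 1)
        + γ • vecMulVec ((J : Set α).indicator 1) (1 - (J : Set α).indicator (1 : α → ℝ)))
      = ((Fintype.card α).choose p : ℝ) •
        ((p / Fintype.card α - γ * (p * (Fintype.card α - p)) /
            (Fintype.card α * (Fintype.card α - 1))) • 1
          + (γ * (p * (Fintype.card α - p)) / (Fintype.card α * (Fintype.card α - 1)))
            • vecMulVec 1 1) := by
  ext i k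
  simp only [Matrix.sum_apply, Matrix.add_apply, Matrix.smul_apply, diagonal_apply,
    vecMulVec_apply, one_apply, Pi.sub_apply, Pi.one_apply, smul_eq_mul]
  rcases eq_or_ne i k with rfl | hik
  · have hidem : ∀ J : Finset α, (J : Set α).indicator (1 : α → ℝ) i
        + γ * ((J : Set α).indicator 1 i * (1 - (J : Set α).indicator 1 i))
          = (J : Set α).indicator 1 i := fun J => by
      by_cases hi : i ∈ J <;> simp [hi]
    simp only [if_true, hidem, sum_powersetCard_indicator (by omega : 1 ≤ p)]
    ring
  · have hcard : 1 < Fintype.card α := Fintype.one_lt_card_iff.2 ⟨i, k, hik⟩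
    have hn : (Fintype.card α : ℝ) ≠ 0 := by positivity
    have hn1 : (Fintype.card α : ℝ) - 1 ≠ 0 := by
      rw [sub_ne_zero]; exact_mod_cast hcard.ne'
    simp only [if_neg hik, zero_add, mul_zero, mul_sub, mul_one, sum_sub_distrib, ← mul_sum]
    rw [sum_powersetCard_indicator (by omega), sum_powersetCard_indicator_mul_indicator hp hik]
    field_simp
    ring

end Sampling

/-- For `A = αI + (β/n)𝟙𝟙ᵀ` and a uniformly random size-`p` subset
`J` of `{1,…,n}` with column selector `S = S_J`,
`E[S(SᵀAS)⁻¹SᵀA] = [p((n−1)α+(p−1)β)/((n−1)(nα+pβ))]·I + [(n−p)pβ/(n(n−1)(nα+pβ))]·𝟙𝟙ᵀ`. -/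
theorem stmt9 (α β : ℝ) (hα : 0 < α) (hαβ : 0 < α + β) (n p : ℕ) (hp : 1 < p) (hpn : p < n)
    (A : Matrix (Fin n) (Fin n) ℝ)
    (hA : A = α • (1 : Matrix (Fin n) (Fin n) ℝ) + (β / n) • Matrix.of (fun _ _ => (1 : ℝ))) :
    ((n.choose p : ℝ))⁻¹ • (∑ J ∈ Finset.powersetCard p (Finset.univ : Finset (Fin n)),
        selector p J * ((selector p J)ᵀ * A * selector p J)⁻¹ * (selector p J)ᵀ * A)
      = ((p : ℝ) * (((n : ℝ) - 1) * α + ((p : ℝ) - 1) * β)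
            / (((n : ℝ) - 1) * ((n : ℝ) * α + (p : ℝ) * β))) • (1 : Matrix (Fin n) (Fin n) ℝ)
        + (((n : ℝ) - p) * p * β / ((n : ℝ) * ((n : ℝ) - 1) * ((n : ℝ) * α + (p : ℝ) * β)))
            • Matrix.of (fun _ _ => (1 : ℝ)) := by
  have hpR : (1 : ℝ) < p := by exact_mod_cast hp
  have hpnR : (p : ℝ) < n := by exact_mod_cast hpn
  have hn : (n : ℝ) ≠ 0 := (by linarith : (0 : ℝ) < n).ne'
  have hn1 : (n : ℝ) - 1 ≠ 0 := (by linarith : (0 : ℝ) < n - 1).ne'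
  have hD : 0 < (n : ℝ) * α + p * β := by
    have := add_pos (mul_pos (sub_pos.2 hpnR) hα) (mul_pos (by linarith : (0 : ℝ) < p) hαβ)
    linarith
  have hac : α + p * (β / n) ≠ 0 := by
    rw [show α + p * (β / n) = (n * α + p * β) / n by field_simp]
    exact div_ne_zero hD.ne' hn
  have hE : (of fun _ _ => (1 : ℝ) : Matrix (Fin n) (Fin n) ℝ) = vecMulVec 1 1 := by
    ext; simp
  subst hA
  rw [hE, sum_congr rfl fun J hJ => selector_mul_inv_mul_transpose_mul
      (mem_powersetCard.1 hJ).2 hα.ne' hac,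
    sum_powersetCard_diagonal_add_smul_vecMulVec (by omega), Fintype.card_fin, smul_smul,
    inv_mul_cancel₀ (by exact_mod_cast (Nat.choose_pos hpn.le).ne'), one_smul]
  congr 2
  · field_simp
    ring
  · field_simp

end
end

section
/- Fix α > 0 and β with α + β > 0, and integers n, p with 1 < p < n. Let A = αI_n + (β/n)·𝟙𝟙ᵀ, let J be a uniformly random subset of {1,…,n} of size p with column selector S = S_J, and let G := E[S(SᵀAS)⁻¹Sᵀ] (which is positive definite). Then E[S(SᵀAS)⁻¹Sᵀ G⁻¹ S(SᵀAS)⁻¹Sᵀ] = [1/α − (n−p)²β / ((n−1)((n−1)α + (p−1)β)(nα + pβ))] · I_n + [(p−1)β(nα(1−2n) + np(α−β) + pβ) / ((n−1)·n·α·((n−1)α + (p−1)β)(nα + pβ))] · 𝟙𝟙ᵀ. -/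
open scoped BigOperators Matrix

noncomputable section

/-!
Call `a • 1 + b • 𝟙𝟙ᵀ` compound symmetric. This class is closed under products, inverses and
`M ↦ SᵀMS` for a selector `S`. The sketched matrices `S_J B S_Jᵀ` (such as the sketched inverse
`S (SᵀAS)⁻¹ Sᵀ`) are not in it, but their average over `J` is when `B` is: entry `(i, k)` of
`E[S_J B S_Jᵀ]` only depends on the probability that `{i, k} ⊆ J`, which is `p / n` or
`p (p - 1) / (n (n - 1))`. Hence `(SᵀAS)⁻¹`, `G`, `G⁻¹`, `(SᵀAS)⁻¹ (SᵀG⁻¹S) (SᵀAS)⁻¹` and the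
final expectation are each described by two scalars, and the theorem reduces to a
rational-function identity in `α, β, n, p`.
-/

open Finset Matrix

def compoundSymm (ι : Type*) [DecidableEq ι] {K : Type*} [Semiring K] (a b : K) : Matrix ι ι K :=
  a • 1 + b • Matrix.of fun _ _ => 1

section CompoundSymm

variable {ι K : Type*} [Fintype ι] [DecidableEq ι]

omit [DecidableEq ι] in
theorem ones_mul_ones [NonAssocSemiring K] :
    (Matrix.of fun _ _ => 1 : Matrix ι ι K) * Matrix.of (fun _ _ => 1) =
      (Fintype.card ι : K) • Matrix.of fun _ _ => 1 := by
  ext; simp [mul_apply]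

theorem compoundSymm_mul [CommRing K] (a b c d : K) :
    compoundSymm ι a b * compoundSymm ι c d =
      compoundSymm ι (a * c) (a * d + b * c + Fintype.card ι * b * d) := by
  simp only [compoundSymm, add_mul, mul_add, smul_mul_smul_comm, Matrix.one_mul, Matrix.mul_one,
    ones_mul_ones, smul_smul]
  module

theorem compoundSymm_inv [Field K] {a b : K} (ha : a ≠ 0) (hab : a + Fintype.card ι * b ≠ 0) :
    (compoundSymm ι a b)⁻¹ = compoundSymm ι a⁻¹ (-(b / (a * (a + Fintype.card ι * b)))) := by
  refine Matrix.inv_eq_right_inv ?_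
  rw [compoundSymm_mul, show (1 : Matrix ι ι K) = compoundSymm ι 1 0 by simp [compoundSymm]]
  congr 1
  · field_simp
  · rw [mul_comm] at hab
    field_simp
    ring

omit [Fintype ι] in
theorem compoundSymm_submatrix [Semiring K] {κ : Type*} [DecidableEq κ] (e : κ → ι)
    (he : Function.Injective e) (a b : K) :
    (compoundSymm ι a b).submatrix e e = compoundSymm κ a b := by
  ext i j
  simp [compoundSymm, one_apply, he.eq_iff]

end CompoundSymm

theorem Finset.sum_orderEmbOfFin {α M : Type*} [LinearOrder α] [AddCommMonoid M] (s : Finset α)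
    {k : ℕ} (h : #s = k) (f : α → M) : ∑ j, f (s.orderEmbOfFin h j) = ∑ x ∈ s, f x := by
  conv_rhs => rw [← s.map_orderEmbOfFin_univ h, sum_map]
  rfl

section Selector

variable {n p : ℕ} {J : Finset (Fin n)}

theorem selector_eq_submatrix (h : #J = p) :
    selector p J = (1 : Matrix (Fin n) (Fin n) ℝ).submatrix id (J.orderEmbOfFin h) := by
  ext i j
  rw [selector, dif_pos h]
  rfl

theorem transpose_selector_mul_mul_selector (h : #J = p) (M : Matrix (Fin n) (Fin n) ℝ) :
    (selector p J)ᵀ * M * selector p J = M.submatrix (J.orderEmbOfFin h) (J.orderEmbOfFin h) := by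
  ext j l
  simp [selector_eq_submatrix h, mul_apply, one_apply]

theorem selector_mul_transpose_selector (h : #J = p) :
    selector p J * (selector p J)ᵀ = diagonal fun i => if i ∈ J then 1 else 0 := by
  ext i k
  simp only [mul_apply, selector_eq_submatrix h, transpose_apply, submatrix_apply, id, one_apply]
  rw [J.sum_orderEmbOfFin h fun x => (if i = x then 1 else 0) * (if k = x then (1 : ℝ) else 0)]
  by_cases hik : i = k <;> simp [hik]

theorem selector_mul_compoundSymm_mul_transpose_selector (h : #J = p) (a b : ℝ) :
    selector p J * compoundSymm (Fin p) a b * (selector p J)ᵀ =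
      diagonal (fun i => if i ∈ J then 1 else 0) * compoundSymm (Fin n) a b *
        diagonal (fun i => if i ∈ J then 1 else 0) := by
  rw [← compoundSymm_submatrix _ (J.orderEmbOfFin h).injective,
    ← transpose_selector_mul_mul_selector h, ← selector_mul_transpose_selector h]
  simp only [Matrix.mul_assoc]

theorem selector_conj_mul_compoundSymm_mul_selector_conj (h : #J = p)
    (B : Matrix (Fin p) (Fin p) ℝ) (a b : ℝ) :
    selector p J * B * (selector p J)ᵀ * compoundSymm (Fin n) a b *
        (selector p J * B * (selector p J)ᵀ) =
      selector p J * (B * compoundSymm (Fin p) a b * B) * (selector p J)ᵀ := by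
  rw [← compoundSymm_submatrix _ (J.orderEmbOfFin h).injective,
    ← transpose_selector_mul_mul_selector h]
  simp only [Matrix.mul_assoc]

theorem inv_transpose_selector_mul_compoundSymm_mul_selector (h : #J = p) {α β : ℝ}
    (hα : α ≠ 0) (hn : (n : ℝ) ≠ 0) (hs : n * α + p * β ≠ 0) :
    ((selector p J)ᵀ * compoundSymm (Fin n) α (β / n) * selector p J)⁻¹ =
      compoundSymm (Fin p) α⁻¹ (-(β / (α * (n * α + p * β)))) := by
  have hs' : α + p * (β / n) ≠ 0 := by
    rw [show α + p * (β / n) = (n * α + p * β) / n by field_simp]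
    exact div_ne_zero hs hn
  rw [transpose_selector_mul_mul_selector h, compoundSymm_submatrix _ (J.orderEmbOfFin h).injective,
    compoundSymm_inv hα (by simpa using hs')]
  congr 2
  simp only [Fintype.card_fin]
  field_simp

end Selector

theorem card_filter_powersetCard_superset_mul_choose {α : Type*} [Fintype α] [DecidableEq α]
    (s : Finset α) {p : ℕ} (hsp : #s ≤ p) :
    #{J ∈ powersetCard p univ | s ⊆ J} * (Fintype.card α).choose #s =
      (Fintype.card α).choose p * p.choose #s := by
  rw [card_filter_powersetCard_subset s univ p (subset_univ s) hsp, card_univ,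
    Nat.choose_mul hsp, mul_comm]

theorem sum_powersetCard_diagonal_mul_mul_diagonal {ι R : Type*} [Fintype ι] [DecidableEq ι]
    [Semiring R] (p : ℕ) (M : Matrix ι ι R) :
    ∑ J ∈ powersetCard p univ,
        diagonal (fun i => if i ∈ J then 1 else 0) * M *
          diagonal (fun i => if i ∈ J then 1 else 0) =
      of fun i k => (#{J ∈ powersetCard p univ | {i, k} ⊆ J} : R) * M i k := by
  ext i k
  simp only [Matrix.sum_apply, diagonal_mul, mul_diagonal, of_apply, insert_subset_iff,
    singleton_subset_iff, card_filter, Nat.cast_sum, sum_mul]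
  refine sum_congr rfl fun J _ => ?_
  by_cases hi : i ∈ J <;> by_cases hk : k ∈ J <;> simp [hi, hk]

theorem average_selector_mul_compoundSymm_mul_transpose_selector {n p : ℕ} (hp : 2 ≤ p)
    (hpn : p ≤ n) (a b : ℝ) :
    ((n.choose p : ℝ))⁻¹ • ∑ J ∈ powersetCard p univ,
        selector p J * compoundSymm (Fin p) a b * (selector p J)ᵀ =
      compoundSymm (Fin n) (p / n * (a + (n - p) / (n - 1) * b))
        (p * (p - 1) / (n * (n - 1)) * b) := by
  have hC : (n.choose p : ℝ) ≠ 0 := by exact_mod_cast (Nat.choose_pos hpn).ne'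
  have hn : (n : ℝ) - 1 ≠ 0 := by
    rw [sub_ne_zero]; exact_mod_cast (by omega : n ≠ 1)
  have hn0 : (n : ℝ) ≠ 0 := by exact_mod_cast (by omega : n ≠ 0)
  rw [sum_congr rfl fun J hJ => selector_mul_compoundSymm_mul_transpose_selector
    (mem_powersetCard.1 hJ).2 a b, sum_powersetCard_diagonal_mul_mul_diagonal]
  ext i k
  have hcount := card_filter_powersetCard_superset_mul_choose {i, k} (p := p)
  simp only [Matrix.smul_apply, of_apply, compoundSymm, Matrix.add_apply, one_apply, smul_eq_mul]
  by_cases hik : i = k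
  · subst hik
    have hdiag := congrArg (Nat.cast : ℕ → ℝ) (hcount (by simp; omega))
    simp only [pair_eq_singleton, card_singleton, Nat.choose_one_right, Fintype.card_fin,
      Nat.cast_mul] at hdiag
    simp only [pair_eq_singleton, if_true]
    field_simp
    linear_combination (a + b) * (n - 1) * hdiag
  · have hoff := congrArg (Nat.cast : ℕ → ℝ) (hcount (by simp [hik]; omega))
    simp only [card_pair hik, Fintype.card_fin, Nat.cast_mul, Nat.cast_choose_two] at hoff
    simp only [hik, if_false]
    field_simp
    linear_combination (2 * b) * hoff

section SketchedInverse

variable {n p : ℕ} {α β : ℝ}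

theorem average_sketchedInverse (hp : 2 ≤ p) (hpn : p ≤ n) (hα : α ≠ 0)
    (hs : n * α + p * β ≠ 0) :
    ((n.choose p : ℝ))⁻¹ • ∑ J ∈ powersetCard p univ,
        selector p J * compoundSymm (Fin p) α⁻¹ (-(β / (α * (n * α + p * β)))) * (selector p J)ᵀ =
      compoundSymm (Fin n) (p * ((n - 1) * α + (p - 1) * β) / ((n - 1) * α * (n * α + p * β)))
        (-(p * (p - 1) * β / (n * (n - 1) * α * (n * α + p * β)))) := by
  have hn0 : (n : ℝ) ≠ 0 := by exact_mod_cast (by omega : n ≠ 0)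
  have hn1 : (n : ℝ) - 1 ≠ 0 := by
    rw [sub_ne_zero]; exact_mod_cast (by omega : n ≠ 1)
  rw [average_selector_mul_compoundSymm_mul_transpose_selector hp hpn]
  congr 1
  · field_simp
    ring
  · field_simp

theorem inv_average_sketchedInverse (hα : α ≠ 0) (hn0 : (n : ℝ) ≠ 0) (hn1 : (n : ℝ) - 1 ≠ 0)
    (hp0 : (p : ℝ) ≠ 0) (hs : n * α + p * β ≠ 0) (ht : (n - 1) * α + (p - 1) * β ≠ 0) :
    (compoundSymm (Fin n) (p * ((n - 1) * α + (p - 1) * β) / ((n - 1) * α * (n * α + p * β)))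
        (-(p * (p - 1) * β / (n * (n - 1) * α * (n * α + p * β)))))⁻¹ =
      compoundSymm (Fin n) ((n - 1) * α * (n * α + p * β) / (p * ((n - 1) * α + (p - 1) * β)))
        ((p - 1) * β * (n * α + p * β) / (n * p * ((n - 1) * α + (p - 1) * β))) := by
  have hsum : p * ((n - 1) * α + (p - 1) * β) / ((n - 1) * α * (n * α + p * β)) +
      Fintype.card (Fin n) * -(p * (p - 1) * β / (n * (n - 1) * α * (n * α + p * β))) =
      p / (n * α + p * β) := by
    simp only [Fintype.card_fin]
    field_simp
    ring
  rw [compoundSymm_inv (div_ne_zero (mul_ne_zero hp0 ht) (mul_ne_zero (mul_ne_zero hn1 hα) hs))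
    (by rw [hsum]; exact div_ne_zero hp0 hs), hsum]
  congr 1 <;> field_simp

end SketchedInverse

/-- For `A = αI + (β/n)𝟙𝟙ᵀ`, `J` a uniformly random size-`p` subset of
`{1,…,n}` with column selector `S = S_J`, and `G = E[S(SᵀAS)⁻¹Sᵀ]`,
`E[S(SᵀAS)⁻¹Sᵀ G⁻¹ S(SᵀAS)⁻¹Sᵀ]` equals the stated combination of `I` and `𝟙𝟙ᵀ`. -/
theorem stmt10 (α β : ℝ) (hα : 0 < α) (hαβ : 0 < α + β) (n p : ℕ) (hp : 1 < p) (hpn : p < n)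
    (A : Matrix (Fin n) (Fin n) ℝ)
    (hA : A = α • (1 : Matrix (Fin n) (Fin n) ℝ) + (β / n) • Matrix.of (fun _ _ => (1 : ℝ)))
    (G : Matrix (Fin n) (Fin n) ℝ)
    (hG : G = ((n.choose p : ℝ))⁻¹ • (∑ J ∈ Finset.powersetCard p (Finset.univ : Finset (Fin n)),
        selector p J * ((selector p J)ᵀ * A * selector p J)⁻¹ * (selector p J)ᵀ)) :
    ((n.choose p : ℝ))⁻¹ • (∑ J ∈ Finset.powersetCard p (Finset.univ : Finset (Fin n)),
        selector p J * ((selector p J)ᵀ * A * selector p J)⁻¹ * (selector p J)ᵀ * G⁻¹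
          * (selector p J * ((selector p J)ᵀ * A * selector p J)⁻¹ * (selector p J)ᵀ))
      = (1 / α - ((n : ℝ) - p) ^ 2 * β
            / (((n : ℝ) - 1) * (((n : ℝ) - 1) * α + ((p : ℝ) - 1) * β)
                * ((n : ℝ) * α + (p : ℝ) * β))) • (1 : Matrix (Fin n) (Fin n) ℝ)
        + (((p : ℝ) - 1) * β * ((n : ℝ) * α * (1 - 2 * (n : ℝ)) + (n : ℝ) * p * (α - β) + (p : ℝ) * β)
            / (((n : ℝ) - 1) * n * α * (((n : ℝ) - 1) * α + ((p : ℝ) - 1) * β)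
                * ((n : ℝ) * α + (p : ℝ) * β)))
            • Matrix.of (fun _ _ => (1 : ℝ)) := by
  have hpR : (1 : ℝ) < p := by exact_mod_cast hp
  have hpnR : (p : ℝ) < n := by exact_mod_cast hpn
  have hn0 : (n : ℝ) ≠ 0 := by linarith
  have hn1 : (n : ℝ) - 1 ≠ 0 := by linarith
  have hp0 : (p : ℝ) ≠ 0 := by linarith
  have hs : n * α + p * β ≠ 0 := by nlinarith
  have ht : (n - 1) * α + (p - 1) * β ≠ 0 := by nlinarith
  have hP : ∀ J ∈ powersetCard p (univ : Finset (Fin n)),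
      selector p J * ((selector p J)ᵀ * A * selector p J)⁻¹ * (selector p J)ᵀ =
        selector p J * compoundSymm (Fin p) α⁻¹ (-(β / (α * (n * α + p * β)))) *
          (selector p J)ᵀ := fun J hJ => by
    rw [hA, ← compoundSymm, inv_transpose_selector_mul_compoundSymm_mul_selector
      (mem_powersetCard.1 hJ).2 hα.ne' hn0 hs]
  have hG' := hG.trans <| (congrArg _ (sum_congr rfl hP)).trans <|
    average_sketchedInverse hp hpn.le hα.ne' hs
  rw [sum_congr rfl fun J hJ => by
      rw [hP J hJ, hG', inv_average_sketchedInverse hα.ne' hn0 hn1 hp0 hs ht,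
        selector_conj_mul_compoundSymm_mul_selector_conj (mem_powersetCard.1 hJ).2,
        compoundSymm_mul, compoundSymm_mul],
    average_selector_mul_compoundSymm_mul_transpose_selector hp hpn.le]
  show compoundSymm _ _ _ = compoundSymm _ _ _
  simp only [Fintype.card_fin]
  -- `field_simp` meets the denominator `ht` in this form
  have ht' : α * (n - 1) + β * (p - 1) ≠ 0 := by rwa [mul_comm α, mul_comm β]
  congr 1
  · field_simp
    ring
  · field_simp
    ring
end
end

section
/- Let M_1, …, M_s be linear subspaces of ℝⁿ such that M_1 + M_2 + ⋯ + M_s = ℝⁿ, and let P_{M_i} denote the orthogonal projector onto M_i. Then the matrix Σ_{i=1}^s P_{M_i} is positive definite (hence invertible), and Σ_{i=1}^s P_{M_i} (Σ_{j=1}^s P_{M_j})⁻¹ P_{M_i} ⪯ Σ_{i=1}^s P_{M_i} in the positive semidefinite order. -/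
/-!
Each orthogonal projector `P i` is positive semidefinite, so `S = ∑ P i` is too, and
`xᴴ S x = ∑ ‖P i x‖²` vanishes only when `x` is orthogonal to every `M i`, hence to their
sum `ℝⁿ`; thus `S` is positive definite.

For the inequality it suffices to show `B - B A⁻¹ B ⪰ 0` whenever `0 ⪯ B ⪯ A` with `A`
positive definite, and to apply this to `B = P i ⪯ S = A` and sum over `i`. Completing the
square with `Z = A⁻¹ B` gives
`B - B A⁻¹ B = (Z - 1)ᴴ B (Z - 1) + Zᴴ (A - B) Z`,
a sum of two congruences of positive semidefinite matrices.
-/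

open Matrix

open scoped BigOperators Matrix ComplexOrder

namespace Matrix

variable {n : Type*} [Fintype n]

theorem IsHermitian.posSemidef_of_isIdempotentElem {R : Type*} [CommRing R] [PartialOrder R]
    [StarRing R] [StarOrderedRing R] {P : Matrix n n R} (hP : P.IsHermitian)
    (hidem : IsIdempotentElem P) : P.PosSemidef := by
  have := posSemidef_conjTranspose_mul_self P
  rwa [hP.eq, hidem.eq] at this

theorem PosSemidef.sub_mul_inv_mul_of_posSemidef_sub [DecidableEq n] {K : Type*} [Field K]
    [PartialOrder K] [StarRing K] [IsOrderedAddMonoid K] {A B : Matrix n n K} (hA : A.PosDef)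
    (hB : B.PosSemidef) (hAB : (A - B).PosSemidef) : (B - B * A⁻¹ * B).PosSemidef := by
  have hAdet : IsUnit A.det := (isUnit_iff_isUnit_det A).mp hA.isUnit
  set Z := A⁻¹ * B
  have key : B - B * A⁻¹ * B = (Z - 1)ᴴ * B * (Z - 1) + Zᴴ * (A - B) * Z := by
    simp only [Z, conjTranspose_sub, conjTranspose_mul, conjTranspose_one, hB.1.eq, hA.1.inv.eq]
    noncomm_ring
    rw [mul_nonsing_inv_cancel_left A _ hAdet]
    abel
  rw [key]
  exact (hB.conjTranspose_mul_mul_same _).add (hAB.conjTranspose_mul_mul_same _)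

theorem posDef_sum_of_iSup_range_eq_top {ι 𝕜 : Type*} [Fintype ι] [RCLike 𝕜]
    {B : ι → Matrix n n 𝕜} (hB : ∀ i, (B i).PosSemidef)
    (hrange : ⨆ i, LinearMap.range (B i).mulVecLin = ⊤) : (∑ i, B i).PosDef := by
  have hsum : (∑ i, B i).PosSemidef := posSemidef_sum _ fun i _ ↦ hB i
  refine .of_dotProduct_mulVec_pos hsum.1 fun x hx ↦
    lt_of_le_of_ne (hsum.dotProduct_mulVec_nonneg x) fun h ↦ hx ?_
  have hker : ∀ i, B i *ᵥ x = 0 := by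
    rw [sum_mulVec, dotProduct_sum, eq_comm,
      Finset.sum_eq_zero_iff_of_nonneg fun i _ ↦ (hB i).dotProduct_mulVec_nonneg x] at h
    exact fun i ↦ ((hB i).dotProduct_mulVec_zero_iff x).mp (h i (Finset.mem_univ i))
  have hortho : ∀ i,
      LinearMap.range (B i).mulVecLin ≤ LinearMap.ker (dotProductBilin 𝕜 𝕜 (star x)) := by
    rintro i _ ⟨y, rfl⟩
    have : star x ᵥ* B i = 0 := by
      rw [← (hB i).1.eq, ← star_mulVec, hker i, star_zero]
    simp [dotProduct_mulVec, this]
  have htop := iSup_le hortho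
  rw [hrange] at htop
  exact dotProduct_star_self_eq_zero.mp (htop Submodule.mem_top)

end Matrix

/-- Let `M_1, …, M_s` be subspaces of `ℝⁿ` whose sum is all of `ℝⁿ`,
and let `P i` be the orthogonal projector (symmetric idempotent matrix with range `M i`)
onto `M_i`.  Then `Σ P_i` is positive definite (hence invertible) and
`Σ_i P_i (Σ_j P_j)⁻¹ P_i ⪯ Σ_i P_i` in the positive semidefinite order. -/
theorem stmt13 (n s : ℕ) (M : Fin s → Submodule ℝ (Fin n → ℝ))
    (hspan : (⨆ i, M i) = ⊤)
    (P : Fin s → Matrix (Fin n) (Fin n) ℝ)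
    (hsymm : ∀ i, (P i)ᵀ = P i)
    (hidem : ∀ i, P i * P i = P i)
    (hrange : ∀ i, LinearMap.range (P i).mulVecLin = M i) :
    (∑ i, P i).PosDef ∧
    ((∑ i, P i) - ∑ i, P i * (∑ j, P j)⁻¹ * P i).PosSemidef := by
  have hP : ∀ i, (P i).PosSemidef := fun i ↦
    IsHermitian.posSemidef_of_isIdempotentElem
      ((conjTranspose_eq_transpose_of_trivial _).trans (hsymm i)) (hidem i)
  have hS : (∑ i, P i).PosDef :=
    posDef_sum_of_iSup_range_eq_top hP ((iSup_congr hrange).trans hspan)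
  refine ⟨hS, ?_⟩
  rw [← Finset.sum_sub_distrib]
  refine posSemidef_sum _ fun i _ ↦ (hP i).sub_mul_inv_mul_of_posSemidef_sub hS ?_
  rw [← Finset.add_sum_erase _ _ (Finset.mem_univ i), add_sub_cancel_left]
  exact posSemidef_sum _ fun j _ ↦ hP j
end

section
/- Let A be an m×n real matrix with full column rank whose rows a_1, …, a_m ∈ ℝⁿ all have unit Euclidean norm. Then Σ_{i=1}^m a_i a_iᵀ (AᵀA)⁻¹ a_i a_iᵀ ⪯ AᵀA in the positive semidefinite order. Consequently, in the randomized Kaczmarz setting where H = a_i a_iᵀ with probability 1/m and G = E[H] = (1/m)AᵀA, one has E[H G⁻¹ H] ⪯ m·G, i.e., the acceleration parameter ν = λ_max(E[(G^{−1/2}HG^{−1/2})²]) satisfies ν ≤ m; moreover μ := λ_min(E[P_{AᵀS}]) = λ_min(AᵀA)/m when S selects a uniformly random row. -/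
open scoped BigOperators Matrix

noncomputable section

/-- The `m×1` column selector matrix picking out row `i`. -/
def colSel {m : ℕ} (i : Fin m) : Matrix (Fin m) (Fin 1) ℝ :=
  Matrix.of fun r _ => if r = i then (1 : ℝ) else 0

open scoped ComplexOrder in
/-- The square root of a positive semidefinite matrix, as `Matrix.PosSemidef.sqrt` was defined
in Mathlib of December 2024 (that definition has since been removed). -/
def PosSemidef.sqrtOld {n : Type*} [Fintype n] [DecidableEq n] {𝕜 : Type*} [RCLike 𝕜]
    {A : Matrix n n 𝕜} (hA : A.PosSemidef) : Matrix n n 𝕜 :=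
  hA.1.eigenvectorUnitary.1 * Matrix.diagonal ((↑) ∘ (√·) ∘ hA.1.eigenvalues) *
    (star hA.1.eigenvectorUnitary : Matrix n n 𝕜)

/-! Writing `aᵢ` for the rows of `A`, each summand `aᵢaᵢᵀ(AᵀA)⁻¹aᵢaᵢᵀ` equals `ℓᵢ aᵢaᵢᵀ`, where the
leverage score `ℓᵢ = aᵢᵀ(AᵀA)⁻¹aᵢ` is a diagonal entry of the orthogonal projector `A(AᵀA)⁻¹Aᵀ`
and so is at most `1`. Hence `AᵀA - Σᵢ aᵢaᵢᵀ(AᵀA)⁻¹aᵢaᵢᵀ = Σᵢ (1 - ℓᵢ) aᵢaᵢᵀ ⪰ 0`. With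
`G = AᵀA/m` this is `E[HG⁻¹H] ⪯ m G`, and conjugating by `G^{-1/2}` turns it into
`E[(G^{-1/2}HG^{-1/2})²] ⪯ m I`, whence `ν ≤ m`. For a unit row, `P_{AᵀSᵢ} = aᵢaᵢᵀ`, so
`E[P_{AᵀS}] = AᵀA/m`. -/

open Matrix

namespace Matrix

variable {ι κ : Type*} [Fintype ι]

lemma transpose_mul_self_eq_sum_vecMulVec {R : Type*} [CommSemiring R] (A : Matrix ι κ R) :
    Aᵀ * A = ∑ i, vecMulVec (A i) (A i) := by
  ext j k
  simp [mul_apply, vecMulVec_apply, sum_apply]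

lemma vecMulVec_mul_mul_vecMulVec [Fintype κ] {R : Type*} [CommSemiring R] (a : κ → R)
    (X : Matrix κ κ R) :
    vecMulVec a a * X * vecMulVec a a = (a ⬝ᵥ X *ᵥ a) • vecMulVec a a := by
  rw [vecMulVec_mul, vecMulVec_mul_vecMulVec, dotProduct_mulVec, dotProduct_comm]
  ext j k
  simp [vecMulVec_apply, mul_left_comm]

lemma diag_le_one_of_isSymm_of_isIdempotentElem {P : Matrix ι ι ℝ} (hP : P.IsSymm)
    (hPP : IsIdempotentElem P) (i : ι) : P i i ≤ 1 := by
  have hrow : P i i = ∑ j, P i j ^ 2 := by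
    conv_lhs => rw [← hPP.eq]
    refine Finset.sum_congr rfl fun j _ => ?_
    dsimp only
    rw [sq, ← transpose_apply P i j, hP.eq]
  have : P i i ^ 2 ≤ P i i :=
    hrow ▸ Finset.single_le_sum (fun j _ => sq_nonneg (P i j)) (Finset.mem_univ i)
  nlinarith

section Leverage

variable [Fintype κ] [DecidableEq κ]

def leverageScore (A : Matrix ι κ ℝ) (i : ι) : ℝ := A i ⬝ᵥ (Aᵀ * A)⁻¹ *ᵥ A i

lemma leverageScore_eq_diag (A : Matrix ι κ ℝ) (i : ι) :
    leverageScore A i = (A * (Aᵀ * A)⁻¹ * Aᵀ) i i := by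
  simp only [leverageScore, mul_apply, transpose_apply, dotProduct, mulVec, Finset.sum_mul,
    Finset.mul_sum]
  rw [Finset.sum_comm]
  exact Finset.sum_congr rfl fun j _ => Finset.sum_congr rfl fun k _ => by ring

lemma leverageScore_le_one (A : Matrix ι κ ℝ) (hA : IsUnit (Aᵀ * A).det) (i : ι) :
    leverageScore A i ≤ 1 := by
  have hsymm : ((Aᵀ * A)⁻¹)ᵀ = (Aᵀ * A)⁻¹ := by
    rw [transpose_nonsing_inv, transpose_mul, transpose_transpose]
  rw [leverageScore_eq_diag]
  refine diag_le_one_of_isSymm_of_isIdempotentElem ?_ ?_ i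
  · rw [IsSymm, transpose_mul, transpose_mul, transpose_transpose, hsymm, Matrix.mul_assoc]
  · show _ = _
    calc A * (Aᵀ * A)⁻¹ * Aᵀ * (A * (Aᵀ * A)⁻¹ * Aᵀ)
          = A * (Aᵀ * A)⁻¹ * (Aᵀ * A) * (Aᵀ * A)⁻¹ * Aᵀ := by simp only [Matrix.mul_assoc]
      _ = A * (Aᵀ * A)⁻¹ * Aᵀ := by rw [nonsing_inv_mul_cancel_right _ _ hA]

theorem posSemidef_transpose_mul_self_sub_sum_vecMulVec_mul_inv_mul (A : Matrix ι κ ℝ)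
    (hA : IsUnit (Aᵀ * A).det) :
    (Aᵀ * A - ∑ i, vecMulVec (A i) (A i) * (Aᵀ * A)⁻¹ * vecMulVec (A i) (A i)).PosSemidef := by
  have hsum : Aᵀ * A - ∑ i, vecMulVec (A i) (A i) * (Aᵀ * A)⁻¹ * vecMulVec (A i) (A i) =
      ∑ i, (1 - leverageScore A i) • vecMulVec (A i) (A i) := by
    simp only [sub_smul, one_smul, Finset.sum_sub_distrib, leverageScore,
      vecMulVec_mul_mul_vecMulVec, ← transpose_mul_self_eq_sum_vecMulVec]
  rw [hsum]
  refine posSemidef_sum _ fun i _ =>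
    PosSemidef.smul ?_ (sub_nonneg.2 (leverageScore_le_one A hA i))
  simpa using posSemidef_vecMulVec_self_star (A i)

end Leverage

section Conjugation

variable {n : Type*} [Fintype n] [DecidableEq n]

lemma smul_smul_inv_sub_smul_sum_mul_inv_mul {K : Type*} [Field K] {c : K} (hc : c ≠ 0)
    {B : Matrix n n K} (hB : IsUnit B.det) (H : ι → Matrix n n K) :
    c • (c⁻¹ • B) - c⁻¹ • ∑ i, H i * (c⁻¹ • B)⁻¹ * H i = B - ∑ i, H i * B⁻¹ * H i := by
  have hinv : (c⁻¹ • B)⁻¹ = c • B⁻¹ := by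
    refine inv_eq_left_inv ?_
    rw [smul_mul_smul_comm, mul_inv_cancel₀ hc, one_smul, nonsing_inv_mul _ hB]
  rw [hinv, smul_inv_smul₀ hc, Finset.smul_sum]
  simp only [Matrix.mul_smul, Matrix.smul_mul, inv_smul_smul₀ hc]

lemma inv_mul_smul_sub_smul_sum_mul_inv_mul_mul_inv {K : Type*} [Field K] {R G : Matrix n n K}
    (hRR : R * R = G) (hG : IsUnit G.det) (c : K) (H : ι → Matrix n n K) :
    R⁻¹ * (c • G - c⁻¹ • ∑ i, H i * G⁻¹ * H i) * R⁻¹ =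
      c • 1 - c⁻¹ • ∑ i, (R⁻¹ * H i * R⁻¹) ^ 2 := by
  have hR : IsUnit R.det := isUnit_of_mul_isUnit_left (by rwa [← det_mul, hRR])
  have hRG : R⁻¹ * G * R⁻¹ = 1 := by
    rw [← hRR, ← Matrix.mul_assoc, nonsing_inv_mul _ hR, Matrix.one_mul, mul_nonsing_inv _ hR]
  have hGinv : G⁻¹ = R⁻¹ * R⁻¹ := by rw [← hRR, Matrix.mul_inv_rev]
  simp only [Matrix.mul_sub, Matrix.sub_mul, Matrix.mul_smul, Matrix.smul_mul, hRG,
    Finset.mul_sum, Finset.sum_mul, sq, hGinv, Matrix.mul_assoc]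

end Conjugation

end Matrix

lemma le_of_mem_eigs_of_posSemidef_smul_one_sub {q : ℕ} {N : Matrix (Fin q) (Fin q) ℝ} {c r : ℝ}
    (hN : (c • 1 - N).PosSemidef) (hr : r ∈ eigs N) : r ≤ c := by
  obtain ⟨v, hv, hNv⟩ := hr
  have hquad := hN.dotProduct_mulVec_nonneg v
  rw [sub_mulVec, smul_mulVec, one_mulVec, hNv, ← sub_smul, dotProduct_smul, star_trivial,
    smul_eq_mul] at hquad
  have hvv : 0 < v ⬝ᵥ v := by simpa using (dotProduct_star_self_pos_iff (v := v)).2 hv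
  exact sub_nonneg.1 (nonneg_of_mul_nonneg_left hquad hvv)

lemma eigs_smul {q : ℕ} (M : Matrix (Fin q) (Fin q) ℝ) {c : ℝ} (hc : c ≠ 0) :
    eigs (c • M) = (c * ·) '' eigs M := by
  ext r
  constructor
  · rintro ⟨v, hv, hMv⟩
    refine ⟨c⁻¹ * r, ⟨v, hv, ?_⟩, mul_inv_cancel_left₀ hc r⟩
    rw [← smul_smul, ← hMv, smul_mulVec, inv_smul_smul₀ hc]
  · rintro ⟨s, ⟨v, hv, hMv⟩, rfl⟩
    exact ⟨v, hv, by rw [smul_mulVec, hMv, smul_smul]⟩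

lemma eq_mul_of_isLeast_eigs_smul {q : ℕ} {M : Matrix (Fin q) (Fin q) ℝ} {c μ lam : ℝ}
    (hc : 0 < c) (hμ : IsLeast (eigs (c • M)) μ) (hlam : IsLeast (eigs M) lam) :
    μ = c * lam := by
  rw [eigs_smul M hc.ne'] at hμ
  exact hμ.unique ((monotone_mul_left_of_nonneg hc.le).map_isLeast hlam)

lemma pinv_one {k : ℕ} : pinv (1 : Matrix (Fin k) (Fin k) ℝ) = 1 := by
  have hex : ∃ B, IsMoorePenrose (1 : Matrix (Fin k) (Fin k) ℝ) B := ⟨1, by simp [IsMoorePenrose]⟩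
  rw [pinv, dif_pos hex]
  simpa using hex.choose_spec.1

lemma proj_replicateCol {n : ℕ} {a : Fin n → ℝ} (ha : a ⬝ᵥ a = 1) :
    proj (replicateCol (Fin 1) a) = vecMulVec a a := by
  have hgram : (replicateCol (Fin 1) a)ᵀ * replicateCol (Fin 1) a = 1 := by
    rw [transpose_replicateCol, replicateRow_mul_replicateCol, ha]
    ext i j
    rw [Subsingleton.elim i j]
    simp
  rw [proj, hgram, pinv_one, Matrix.mul_one, transpose_replicateCol]
  exact (vecMulVec_eq (Fin 1) a a).symm

lemma transpose_mul_colSel {m n : ℕ} (A : Matrix (Fin m) (Fin n) ℝ) (i : Fin m) :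
    Aᵀ * colSel i = replicateCol (Fin 1) (A i) := by
  ext j _
  simp [mul_apply, colSel]

section SqrtOld

open scoped ComplexOrder

variable {n : Type*} [Fintype n] [DecidableEq n] {𝕜 : Type*} [RCLike 𝕜] {G : Matrix n n 𝕜}

lemma PosSemidef.sqrtOld_mul_self (hG : G.PosSemidef) :
    PosSemidef.sqrtOld hG * PosSemidef.sqrtOld hG = G := by
  conv_rhs => rw [hG.1.spectral_theorem, Unitary.conjStarAlgAut_apply]
  set U : Matrix n n 𝕜 := hG.1.eigenvectorUnitary.1
  set D : Matrix n n 𝕜 := diagonal ((↑) ∘ (√·) ∘ hG.1.eigenvalues)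
  have hU : star U * U = 1 := Unitary.coe_star_mul_self _
  have hD : D * D = diagonal ((↑) ∘ hG.1.eigenvalues) := by
    rw [diagonal_mul_diagonal]
    congr 1 with i
    simp [← RCLike.ofReal_mul, Real.mul_self_sqrt (hG.eigenvalues_nonneg i)]
  calc U * D * star U * (U * D * star U) = U * (D * (star U * U) * D) * star U := by
        simp only [Matrix.mul_assoc]
    _ = U * diagonal ((↑) ∘ hG.1.eigenvalues) * star U := by
        rw [hU, Matrix.mul_one, hD, Matrix.mul_assoc]

lemma PosSemidef.isHermitian_sqrtOld (hG : G.PosSemidef) :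
    (PosSemidef.sqrtOld hG).IsHermitian := by
  rw [IsHermitian, PosSemidef.sqrtOld, conjTranspose_mul, conjTranspose_mul,
    diagonal_conjTranspose, star_eq_conjTranspose, conjTranspose_conjTranspose, Matrix.mul_assoc]
  congr 3 with i
  simp

end SqrtOld

theorem stmt17_general (m n : ℕ) (hm : 0 < m)
    (A : Matrix (Fin m) (Fin n) ℝ)
    (hnorm : ∀ i, A i ⬝ᵥ A i = 1)
    (G : Matrix (Fin n) (Fin n) ℝ) (hG : G = (m : ℝ)⁻¹ • (Aᵀ * A))
    (hGpd : G.PosDef) :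
    ((Aᵀ * A) - ∑ i : Fin m,
        Matrix.vecMulVec (A i) (A i) * (Aᵀ * A)⁻¹ * Matrix.vecMulVec (A i) (A i)).PosSemidef ∧
    ((m : ℝ) • G - (m : ℝ)⁻¹ • (∑ i : Fin m,
        Matrix.vecMulVec (A i) (A i) * G⁻¹ * Matrix.vecMulVec (A i) (A i))).PosSemidef ∧
    (∀ ν : ℝ, IsGreatest (eigs ((m : ℝ)⁻¹ • (∑ i : Fin m,
        ((PosSemidef.sqrtOld hGpd.posSemidef)⁻¹ * Matrix.vecMulVec (A i) (A i) * (PosSemidef.sqrtOld hGpd.posSemidef)⁻¹) ^ 2))) ν →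
      ν ≤ m) ∧
    (∀ μ lam : ℝ,
      IsLeast (eigs ((m : ℝ)⁻¹ • (∑ i : Fin m, proj (Aᵀ * colSel i)))) μ →
      IsLeast (eigs (Aᵀ * A)) lam →
      μ = lam / m) := by
  subst hG
  have hm₀ : (m : ℝ) ≠ 0 := by positivity
  have hGdet : IsUnit ((m : ℝ)⁻¹ • (Aᵀ * A)).det := (isUnit_iff_isUnit_det _).1 hGpd.isUnit
  have hgram : IsUnit (Aᵀ * A).det := by
    rw [det_smul] at hGdet
    exact isUnit_of_mul_isUnit_right hGdet
  have hsandwich := posSemidef_transpose_mul_self_sub_sum_vecMulVec_mul_inv_mul A hgram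
  have hsandwichG := (smul_smul_inv_sub_smul_sum_mul_inv_mul hm₀ hgram
    fun i => vecMulVec (A i) (A i)) ▸ hsandwich
  refine ⟨hsandwich, hsandwichG, fun ν hν => ?_, fun μ lam hμ hlam => ?_⟩
  · set R := PosSemidef.sqrtOld hGpd.posSemidef
    have hconj := hsandwichG.mul_mul_conjTranspose_same R⁻¹
    rw [conjTranspose_nonsing_inv, (PosSemidef.isHermitian_sqrtOld _).eq,
      inv_mul_smul_sub_smul_sum_mul_inv_mul_mul_inv (PosSemidef.sqrtOld_mul_self _) hGdet] at hconj
    exact le_of_mem_eigs_of_posSemidef_smul_one_sub hconj hν.1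
  · simp only [transpose_mul_colSel, proj_replicateCol (hnorm _),
      ← transpose_mul_self_eq_sum_vecMulVec] at hμ
    rw [eq_mul_of_isLeast_eigs_smul (by positivity) hμ hlam, div_eq_inv_mul]

/-- Let `A` be `m×n` with full column rank and unit-norm rows
`a_1, …, a_m`.  Then `Σ_i a_i a_iᵀ (AᵀA)⁻¹ a_i a_iᵀ ⪯ AᵀA`.  Consequently, in the
randomized Kaczmarz setting (`H = a_i a_iᵀ` with probability `1/m`,
`G = E[H] = (1/m)AᵀA`): `E[H G⁻¹ H] ⪯ m·G`, the acceleration parameter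
`ν = λ_max(E[(G^{−1/2}HG^{−1/2})²])` satisfies `ν ≤ m`, and
`μ = λ_min(E[P_{AᵀS}]) = λ_min(AᵀA)/m` for `S` a uniformly random column selector of a row. -/
theorem stmt17 (m n : ℕ) (hm : 0 < m)
    (A : Matrix (Fin m) (Fin n) ℝ) (hrank : A.rank = n)
    (hnorm : ∀ i, A i ⬝ᵥ A i = 1)
    (G : Matrix (Fin n) (Fin n) ℝ) (hG : G = (m : ℝ)⁻¹ • (Aᵀ * A))
    (hGpd : G.PosDef) :
    ((Aᵀ * A) - ∑ i : Fin m,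
        Matrix.vecMulVec (A i) (A i) * (Aᵀ * A)⁻¹ * Matrix.vecMulVec (A i) (A i)).PosSemidef ∧
    ((m : ℝ) • G - (m : ℝ)⁻¹ • (∑ i : Fin m,
        Matrix.vecMulVec (A i) (A i) * G⁻¹ * Matrix.vecMulVec (A i) (A i))).PosSemidef ∧
    (∀ ν : ℝ, IsGreatest (eigs ((m : ℝ)⁻¹ • (∑ i : Fin m,
        ((PosSemidef.sqrtOld hGpd.posSemidef)⁻¹ * Matrix.vecMulVec (A i) (A i) * (PosSemidef.sqrtOld hGpd.posSemidef)⁻¹) ^ 2))) ν →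
      ν ≤ m) ∧
    (∀ μ lam : ℝ,
      IsLeast (eigs ((m : ℝ)⁻¹ • (∑ i : Fin m, proj (Aᵀ * colSel i)))) μ →
      IsLeast (eigs (Aᵀ * A)) lam →
      μ = lam / m) :=
  stmt17_general m n hm A hnorm G hG hGpd
end
end
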